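/- Let G be an abelian group whose torsion subgroup T(G) has finite exponent, and let A be a Schur ring over G. Then T(G) is an A-subgroup. -/

import Mathlib

noncomputable def simpleQuantity (F : Type*) [Field F] {G : Type*} [Group G]
    (D : Finset G) : MonoidAlgebra F G :=
  ∑ g ∈ D, MonoidAlgebra.single g 1

structure SchurRing (F G : Type*) [Field F] [Group G] where
  parts : Set (Finset G)
  parts_nonempty : ∀ D ∈ parts, D.Nonempty
  cover : ∀ g : G, ∃ D ∈ parts, g ∈ D
  eq_of_mem : ∀ D₁ ∈ parts, ∀ D₂ ∈ parts, ∀ g : G, g ∈ D₁ → g ∈ D₂ → D₁ = D₂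
  one_mem : ({1} : Finset G) ∈ parts
  inv_mem : ∀ D ∈ parts, ∃ D' ∈ parts, ∀ g : G, g ∈ D' ↔ g⁻¹ ∈ D
  mul_mem : ∀ x ∈ Submodule.span F (simpleQuantity F '' parts),
    ∀ y ∈ Submodule.span F (simpleQuantity F '' parts),
    x * y ∈ Submodule.span F (simpleQuantity F '' parts)

noncomputable def SchurRing.span {F G : Type*} [Field F] [Group G] (A : SchurRing F G) :
    Submodule F (MonoidAlgebra F G) :=
  Submodule.span F (simpleQuantity F '' A.parts)

def SchurRing.IsASet {F G : Type*} [Field F] [Group G] (A : SchurRing F G)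
    (S : Set G) : Prop :=
  ∀ D ∈ A.parts, (∃ g ∈ D, g ∈ S) → ↑D ⊆ S

/-!
Choose a prime `p ≡ 1` modulo the exponent of `T(G)`; then `x ↦ x ^ p` is injective on `G` and
fixes `T(G)` pointwise. For a basic set `D`, the integer coefficients of `(∑ d ∈ D, d) ^ p` are
constant on basic sets (it lies in the Schur ring), and modulo `p` they form the indicator of
`D^{(p)} = {d ^ p | d ∈ D}` (Frobenius), so `D^{(p)}` is a union of basic sets. If `D` contains a
torsion element `g = g ^ p`, it meets `D^{(p)}`, hence `D ⊆ D^{(p)}` and by counting `D^{(p)} = D`.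
Iterating `x ↦ x ^ p` inside the finite set `D` then forces every element of `D` to have finite
order.
-/

open MonoidAlgebra

section Torsion

variable {G : Type*}

theorem isOfFinOrder_of_mapsTo_pow [LeftCancelMonoid G] {s : Set G} (hs : s.Finite) {m : ℕ}
    (hm : 2 ≤ m) (hmaps : Set.MapsTo (· ^ m) s s) {x : G} (hx : x ∈ s) : IsOfFinOrder x := by
  by_contra hx_inf
  have hinj : Function.Injective (fun j : ℕ => x ^ m ^ j) :=
    (injective_pow_iff_not_isOfFinOrder.mpr hx_inf).comp (Nat.pow_right_injective hm)
  refine Set.not_infinite.mpr hs (Set.infinite_of_injective_forall_mem hinj fun j => ?_)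
  simpa only [pow_iterate] using hmaps.iterate j hx

theorem pow_injective_of_forall_torsion_pow_eq_self [CommGroup G] {m : ℕ} (hm : 0 < m)
    (h : ∀ g ∈ CommGroup.torsion G, g ^ m = g) : Function.Injective (· ^ m : G → G) := by
  intro x y hxy
  have hdiv : (x / y) ^ m = 1 := by rw [div_pow, div_eq_one]; exact hxy
  have htors : x / y ∈ CommGroup.torsion G := isOfFinOrder_iff_pow_eq_one.mpr ⟨m, hm, hdiv⟩
  rw [← div_eq_one, ← h _ htors, hdiv]

end Torsion

section SimpleQuantity

variable {K G : Type*} [Field K]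

theorem coeff_simpleQuantity [Group G] [DecidableEq G] (D : Finset G) (x : G) :
    (simpleQuantity K D).coeff x = if x ∈ D then 1 else 0 := by
  simp [simpleQuantity, coeff_sum, Finsupp.single_apply]

theorem mapRingHom_intCast_sum_single_one [Group G] (D : Finset G) :
    mapRingHom G (Int.castRingHom K) (∑ d ∈ D, single d 1) = simpleQuantity K D := by
  simp [simpleQuantity]

theorem simpleQuantity_pow_char [CommGroup G] [DecidableEq G] (p : ℕ) [Fact p.Prime] [CharP K p]
    (D : Finset G) (hinj : Function.Injective (· ^ p : G → G)) :
    simpleQuantity K D ^ p = simpleQuantity K (D.image (· ^ p)) := by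
  have : CharP (MonoidAlgebra K G) p := charP_of_injective_algebraMap' K p
  rw [simpleQuantity, simpleQuantity, sum_pow_char, Finset.sum_image hinj.injOn]
  simp only [single_pow, one_pow]

end SimpleQuantity

namespace SchurRing

variable {F G : Type*} [Field F]

section Group

variable [Group G] (A : SchurRing F G)

theorem simpleQuantity_mem_span {D : Finset G} (hD : D ∈ A.parts) :
    simpleQuantity F D ∈ A.span :=
  Submodule.subset_span ⟨D, hD, rfl⟩

theorem one_mem_span : (1 : MonoidAlgebra F G) ∈ A.span := by
  simpa [simpleQuantity, one_def] using A.simpleQuantity_mem_span A.one_mem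

theorem pow_mem_span {x : MonoidAlgebra F G} (hx : x ∈ A.span) (k : ℕ) : x ^ k ∈ A.span := by
  induction k with
  | zero => simpa using A.one_mem_span
  | succ k ih => rw [pow_succ]; exact A.mul_mem _ ih _ hx

theorem mem_iff_mem_of_mem_parts {P Q : Finset G} (hP : P ∈ A.parts) (hQ : Q ∈ A.parts)
    {a b : G} (ha : a ∈ P) (hb : b ∈ P) : a ∈ Q ↔ b ∈ Q :=
  ⟨fun haQ => A.eq_of_mem P hP Q hQ a ha haQ ▸ hb, fun hbQ => A.eq_of_mem P hP Q hQ b hb hbQ ▸ ha⟩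

theorem coeff_eq_of_mem_span {x : MonoidAlgebra F G} (hx : x ∈ A.span) {P : Finset G}
    (hP : P ∈ A.parts) {a b : G} (ha : a ∈ P) (hb : b ∈ P) : x.coeff a = x.coeff b := by
  classical
  induction hx using Submodule.span_induction with
  | mem y hy =>
    obtain ⟨Q, hQ, rfl⟩ := hy
    simp only [coeff_simpleQuantity, A.mem_iff_mem_of_mem_parts hP hQ ha hb]
  | zero => rfl
  | add u v _ _ hu hv => simp only [coeff_add, Finsupp.add_apply, hu, hv]
  | smul r u _ hu => simp only [coeff_smul, Finsupp.smul_apply, hu]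

end Group

theorem isASet_image_pow [CharZero F] [CommGroup G] [DecidableEq G] (A : SchurRing F G)
    {p : ℕ} (hp : p.Prime) (hinj : Function.Injective (· ^ p : G → G)) {D : Finset G}
    (hD : D ∈ A.parts) : A.IsASet ↑(D.image (· ^ p)) := by
  have := Fact.mk hp
  rintro Q hQ ⟨a, haQ, ha⟩ b hb
  set z : MonoidAlgebra ℤ G := (∑ d ∈ D, single d 1) ^ p
  have hz : z.coeff a = z.coeff b := by
    have := A.coeff_eq_of_mem_span (A.pow_mem_span (A.simpleQuantity_mem_span hD) p) hQ haQ hb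
    rw [← mapRingHom_intCast_sum_single_one, ← map_pow, coeff_mapRingHom, coeff_mapRingHom] at this
    exact Int.cast_injective this
  have hmodp (x : G) : ((z.coeff x : ℤ) : ZMod p) = if x ∈ D.image (· ^ p) then 1 else 0 := by
    have := coeff_mapRingHom (Int.castRingHom (ZMod p)) z x
    rwa [map_pow, mapRingHom_intCast_sum_single_one, simpleQuantity_pow_char p D hinj,
      coeff_simpleQuantity, eq_comm] at this
  have hb_one := hmodp b
  rw [← hz, hmodp a, if_pos (Finset.mem_coe.mp ha)] at hb_one
  by_contra hb'
  exact one_ne_zero (hb_one.trans (if_neg hb'))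

end SchurRing

/-- If the torsion subgroup of an abelian group `G` has finite exponent, then it
is an `A`-subgroup for every Schur ring `A` over `G`. -/
theorem torsion_isASet {F G : Type*} [Field F] [CharZero F] [CommGroup G]
    (hexp : ∃ n : ℕ, 0 < n ∧ ∀ g ∈ CommGroup.torsion G, g ^ n = 1)
    (A : SchurRing F G) :
    A.IsASet ↑(CommGroup.torsion G) := by
  classical
  obtain ⟨n, hn, hT⟩ := hexp
  obtain ⟨p, hp, -, hp1⟩ := Nat.exists_prime_gt_modEq_one 0 hn.ne'
  have hfix : ∀ g ∈ CommGroup.torsion G, g ^ p = g := fun g hg =>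
    (pow_eq_pow_iff_modEq.mpr (hp1.of_dvd (orderOf_dvd_of_pow_eq_one (hT g hg)))).trans (pow_one g)
  have hinj := pow_injective_of_forall_torsion_pow_eq_self hp.pos hfix
  rintro D hD ⟨g, hgD, hg⟩
  have hsub : D ⊆ D.image (· ^ p) := by
    exact_mod_cast A.isASet_image_pow hp hinj hD D hD
      ⟨g, hgD, Finset.mem_image.mpr ⟨g, hgD, hfix g hg⟩⟩
  have hD_eq : D.image (· ^ p) = D :=
    (Finset.eq_of_subset_of_card_le hsub Finset.card_image_le).symm
  have hmaps : Set.MapsTo (· ^ p) (D : Set G) D := fun x hx =>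
    Finset.image_subset_iff.mp hD_eq.subset x hx
  exact fun x hx => isOfFinOrder_of_mapsTo_pow D.finite_toSet hp.two_le hmaps hx
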